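/- arXiv:quant-ph/0312022 — 6 statements merged into one kernel-verified Lean document; each statement's English description precedes it below -/
import Mathlib

section
/- Let θ be a real number with 0 < θ ≤ π/2 and let q be a real number. Then (1 − cos θ)·((sin((q+1)θ))² + (sin(qθ))²) = (sin θ)² holds if and only if θ = π/2 or there exists an integer k with (2q+1)θ = (2k+1)π (the principal solution being q = (π − θ)/(2θ)). -/
open Real

theorem stmt_0 (θ q : ℝ) (hθ0 : 0 < θ) (hθ1 : θ ≤ π / 2) :
    (1 - Real.cos θ) * (Real.sin ((q + 1) * θ) ^ 2 + Real.sin (q * θ) ^ 2) = Real.sin θ ^ 2 ↔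
      θ = π / 2 ∨ ∃ k : ℤ, (2 * q + 1) * θ = (2 * k + 1) * π := by
  have hπ := Real.pi_pos
  have hclt : Real.cos θ < 1 := by
    have h := Real.cos_lt_cos_of_nonneg_of_le_pi le_rfl (by linarith) hθ0
    simpa using h
  have hkey : (1 - Real.cos θ) * (Real.sin ((q + 1) * θ) ^ 2 + Real.sin (q * θ) ^ 2)
      - Real.sin θ ^ 2
      = (1 - Real.cos θ) * (-(Real.cos θ * (1 + Real.cos ((2 * q + 1) * θ)))) := by
    have h1 : (q + 1) * θ = q * θ + θ := by ring
    have h2 : (2 * q + 1) * θ = q * θ + (q * θ + θ) := by ring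
    have hs := Real.sin_sq_add_cos_sq (q * θ)
    have ht := Real.sin_sq_add_cos_sq θ
    rw [h1, h2, Real.cos_add, Real.cos_add, Real.sin_add]
    linear_combination (1 - Real.cos θ) * hs +
      ((1 - Real.cos θ) * Real.cos (q * θ) ^ 2 - 1) * ht
  constructor
  · intro h
    have h0 : (1 - Real.cos θ) * (-(Real.cos θ * (1 + Real.cos ((2 * q + 1) * θ)))) = 0 := by
      rw [← hkey]; linarith
    have h1 : Real.cos θ * (1 + Real.cos ((2 * q + 1) * θ)) = 0 := by
      rcases mul_eq_zero.mp h0 with h | h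
      · linarith
      · linarith
    rcases mul_eq_zero.mp h1 with h2 | h2
    · left
      rcases Real.cos_eq_zero_iff.mp h2 with ⟨k, hk⟩
      -- θ = (2k+1)π/2 with 0 < θ ≤ π/2 forces k = 0
      have hk0 : k = 0 := by
        by_contra hkne
        rcases lt_or_gt_of_ne hkne with hlt | hgt
        · have : (k : ℝ) ≤ -1 := by exact_mod_cast (by omega : k ≤ -1)
          nlinarith
        · have : (1 : ℝ) ≤ (k : ℝ) := by exact_mod_cast hgt
          nlinarith
      rw [hk0] at hk
      push_cast at hk
      linarith
    · right
      have h3 : Real.cos ((2 * q + 1) * θ) = -1 := by linarith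
      rcases Real.cos_eq_neg_one_iff.mp h3 with ⟨k, hk⟩
      exact ⟨k, by linarith [hk]⟩
  · intro h
    have h1 : Real.cos θ * (1 + Real.cos ((2 * q + 1) * θ)) = 0 := by
      rcases h with h | ⟨k, hk⟩
      · rw [h, Real.cos_pi_div_two]; ring
      · have : Real.cos ((2 * q + 1) * θ) = -1 := by
          rw [hk]
          apply Real.cos_eq_neg_one_iff.mpr
          exact ⟨k, by ring⟩
        rw [this]; ring
    have := hkey
    rw [h1] at this
    linarith
end

section
/- Let θ be a real number with 0 < θ ≤ π/2, set y = cos θ, and let s be a real number. Define sequences (a_q), (b_q), (c_q) by a_0 = s, b_0 = s, c_0 = 0, and for q ≥ 1: μ_q = y·a_{q−1} + (1−y)·c_{q−1}, a_q = 2μ_q − a_{q−1}, b_q = 2μ_q − c_{q−1}, c_q = −b_{q−1}. Then for every natural number q: a_q = s·(sin((q+1)θ) − sin(qθ))/sin θ, b_q = s·sin((q+1)θ)/sin θ, and c_q = −s·sin(qθ)/sin θ. -/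
open Real

theorem stmt_4 (θ : ℝ) (hθ0 : 0 < θ) (hθ1 : θ ≤ π / 2) (y s : ℝ) (hy : y = Real.cos θ)
    (a b c : ℕ → ℝ) (ha0 : a 0 = s) (hb0 : b 0 = s) (hc0 : c 0 = 0)
    (ha : ∀ q : ℕ, a (q + 1) = 2 * (y * a q + (1 - y) * c q) - a q)
    (hb : ∀ q : ℕ, b (q + 1) = 2 * (y * a q + (1 - y) * c q) - c q)
    (hc : ∀ q : ℕ, c (q + 1) = -b q) :
    ∀ q : ℕ,
      a q = s * (Real.sin ((q + 1) * θ) - Real.sin (q * θ)) / Real.sin θ ∧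
      b q = s * Real.sin ((q + 1) * θ) / Real.sin θ ∧
      c q = -(s * Real.sin (q * θ) / Real.sin θ) := by
  have hθπ : θ < π := lt_of_le_of_lt hθ1 (by linarith [Real.pi_pos])
  have hs : Real.sin θ ≠ 0 := ne_of_gt (Real.sin_pos_of_pos_of_lt_pi hθ0 hθπ)
  intro q
  induction q with
  | zero =>
      refine ⟨?_, ?_, ?_⟩ <;> push_cast <;>
        simp [ha0, hb0, hc0, hs, mul_div_assoc] <;> field_simp
  | succ n ih =>
      obtain ⟨iha, ihb, ihc⟩ := ih
      have h2 : Real.sin (((n : ℝ) + 2) * θ)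
          = 2 * Real.cos θ * Real.sin (((n : ℝ) + 1) * θ) - Real.sin ((n : ℝ) * θ) := by
        have h := Real.sin_add (((n : ℝ) + 1) * θ) θ
        have h' := Real.sin_sub (((n : ℝ) + 1) * θ) θ
        have e1 : ((n : ℝ) + 1) * θ + θ = ((n : ℝ) + 2) * θ := by ring
        have e2 : ((n : ℝ) + 1) * θ - θ = (n : ℝ) * θ := by ring
        rw [e1] at h; rw [e2] at h'
        rw [h, h']; ring
      refine ⟨?_, ?_, ?_⟩
      · rw [ha, iha, ihc, hy]; push_cast
        rw [show ((n : ℝ) + 1 + 1) = (n : ℝ) + 2 from by ring, h2]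
        field_simp; ring
      · rw [hb, iha, ihc, hy]; push_cast
        rw [show ((n : ℝ) + 1 + 1) = (n : ℝ) + 2 from by ring, h2]
        field_simp; ring
      · rw [hc, ihb]; push_cast; ring
end

section
/- Let N and M be natural numbers with 1 ≤ M ≤ N. Set y = 1 − M/N and s = 1/√N (as real numbers), and define sequences (a_q), (b_q), (c_q) by a_0 = s, b_0 = s, c_0 = 0, and for q ≥ 1: μ_q = y·a_{q−1} + (1−y)·c_{q−1}, a_q = 2μ_q − a_{q−1}, b_q = 2μ_q − c_{q−1}, c_q = −b_{q−1}. Then for every natural number q ≥ 1, (N − M)·a_q² + M·(b_q² + c_q²) = 1. -/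
theorem stmt_7 (N M : ℕ) (hM1 : 1 ≤ M) (hMN : M ≤ N) (y s : ℝ)
    (hy : y = 1 - (M : ℝ) / N) (hs : s = 1 / Real.sqrt N)
    (a b c : ℕ → ℝ) (ha0 : a 0 = s) (hb0 : b 0 = s) (hc0 : c 0 = 0)
    (ha : ∀ q : ℕ, a (q + 1) = 2 * (y * a q + (1 - y) * c q) - a q)
    (hb : ∀ q : ℕ, b (q + 1) = 2 * (y * a q + (1 - y) * c q) - c q)
    (hc : ∀ q : ℕ, c (q + 1) = -b q) :
    ∀ q : ℕ, 1 ≤ q → ((N : ℝ) - M) * a q ^ 2 + M * (b q ^ 2 + c q ^ 2) = 1 := by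
  have hN1 : 1 ≤ N := hM1.trans hMN
  have hNpos : (0 : ℝ) < N := by exact_mod_cast hN1
  have hN0 : (N : ℝ) ≠ 0 := ne_of_gt hNpos
  have hs2 : s ^ 2 = 1 / N := by
    rw [hs, div_pow, one_pow, Real.sq_sqrt hNpos.le]
  have key : ∀ q : ℕ, (N : ℝ) * (y * a q ^ 2 + (1 - y) * (b q ^ 2 + c q ^ 2)) = 1 := by
    intro q
    induction q with
    | zero =>
      rw [ha0, hb0, hc0, hs2]
      field_simp
      ring
    | succ n ih =>
      rw [ha n, hb n, hc n]
      linear_combination ih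
  intro q _
  have hM' : (M : ℝ) = N * (1 - y) := by rw [hy]; field_simp; ring
  linear_combination key q + (b q ^ 2 + c q ^ 2 - a q ^ 2) * hM'
end

section
/- For every real number x with 1/3 ≤ x ≤ 1, 5x − 8x² + 4x³ ≥ 25/27. -/
theorem stmt_9 (x : ℝ) (h1 : 1 / 3 ≤ x) (h2 : x ≤ 1) :
    5 * x - 8 * x ^ 2 + 4 * x ^ 3 ≥ 25 / 27 := by
  nlinarith [mul_nonneg (by linarith : (0:ℝ) ≤ x - 1/3) (sq_nonneg (x - 5/6))]
end

section
/- For every natural number N ≥ 1, (1/2^N) · Σ_{M=1}^{N} C(N,M) · (5(M/N) − 8(M/N)² + 4(M/N)³) = 1 − 1/(2N), where C(N,M) denotes the binomial coefficient. -/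
open Finset

lemma choose_shift (n i : ℕ) :
    ((i:ℝ)+1) * ((n+1).choose (i+1)) = ((n:ℝ)+1) * (n.choose i) := by
  have h : ((n+1) * n.choose i : ℕ) = ((n+1).choose (i+1) * (i+1) : ℕ) :=
    Nat.add_one_mul_choose_eq n i
  have h' : (((n:ℝ)+1) * (n.choose i)) = ((n+1).choose (i+1) : ℝ) * ((i:ℝ)+1) := by
    exact_mod_cast congrArg (Nat.cast : ℕ → ℝ) h
  linear_combination -h'

lemma sum_choose_real (n : ℕ) : ∑ i ∈ range (n+1), (n.choose i : ℝ) = 2^n := by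
  rw [← Nat.cast_sum, Nat.sum_range_choose]
  push_cast
  ring

lemma sumA (m : ℕ) : 2 * ∑ j ∈ range (m+1), (j:ℝ) * (m.choose j) = m * 2^m := by
  cases m with
  | zero => simp
  | succ n =>
    rw [Finset.sum_range_succ']
    push_cast
    rw [Finset.sum_congr rfl (fun i _ => choose_shift n i), ← Finset.mul_sum,
      sum_choose_real]
    ring

lemma sumB (m : ℕ) : 4 * ∑ j ∈ range (m+1), (j:ℝ)^2 * (m.choose j) = m * (m+1) * 2^m := by
  cases m with
  | zero => simp
  | succ n =>
    rw [Finset.sum_range_succ']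
    push_cast
    have key : ∀ i ∈ range (n+1),
        ((i:ℝ)+1)^2 * ((n+1).choose (i+1))
          = ((n:ℝ)+1) * (((i:ℝ)+1) * (n.choose i)) := by
      intro i _
      have := choose_shift n i
      have : ((i:ℝ)+1)^2 * ((n+1).choose (i+1)) = ((i:ℝ)+1) * (((n:ℝ)+1) * (n.choose i)) := by
        rw [pow_two, mul_assoc, this]
      linarith [this]
    rw [Finset.sum_congr rfl key, ← Finset.mul_sum]
    have expand : ∑ i ∈ range (n+1), (((i:ℝ)+1) * (n.choose i))
        = (∑ i ∈ range (n+1), (i:ℝ) * (n.choose i)) + ∑ i ∈ range (n+1), (n.choose i : ℝ) := by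
      rw [← Finset.sum_add_distrib]
      apply Finset.sum_congr rfl
      intro i _; ring
    rw [expand, sum_choose_real]
    have := sumA n
    linear_combination (2*((n:ℝ)+1)) * this

lemma sumC (m : ℕ) : 8 * ∑ j ∈ range (m+1), (j:ℝ)^3 * (m.choose j) = m^2 * (m+3) * 2^m := by
  cases m with
  | zero => simp
  | succ n =>
    rw [Finset.sum_range_succ']
    push_cast
    have key : ∀ i ∈ range (n+1),
        ((i:ℝ)+1)^3 * ((n+1).choose (i+1))
          = ((n:ℝ)+1) * (((i:ℝ)+1)^2 * (n.choose i)) := by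
      intro i _
      have h := choose_shift n i
      have : ((i:ℝ)+1)^3 * ((n+1).choose (i+1))
          = ((i:ℝ)+1)^2 * ((((i:ℝ)+1) * ((n+1).choose (i+1)))) := by ring
      rw [this, h]; ring
    rw [Finset.sum_congr rfl key, ← Finset.mul_sum]
    have expand : ∑ i ∈ range (n+1), (((i:ℝ)+1)^2 * (n.choose i))
        = (∑ i ∈ range (n+1), (i:ℝ)^2 * (n.choose i))
          + 2 * (∑ i ∈ range (n+1), (i:ℝ) * (n.choose i))
          + ∑ i ∈ range (n+1), (n.choose i : ℝ) := by
      rw [Finset.mul_sum, ← Finset.sum_add_distrib, ← Finset.sum_add_distrib]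
      apply Finset.sum_congr rfl
      intro i _; ring
    rw [expand, sum_choose_real]
    have hA := sumA n
    have hB := sumB n
    linear_combination 2*((n:ℝ)+1)*hB + 8*((n:ℝ)+1)*hA

theorem stmt_12 (N : ℕ) (hN : 1 ≤ N) :
    (1 / 2 ^ N : ℝ) * ∑ M ∈ Finset.Icc 1 N, (N.choose M : ℝ) *
        (5 * ((M : ℝ) / N) - 8 * ((M : ℝ) / N) ^ 2 + 4 * ((M : ℝ) / N) ^ 3) =
      1 - 1 / (2 * N) := by
  have hNR : (N:ℝ) ≠ 0 := Nat.cast_ne_zero.mpr (by omega)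
  have hext : ∑ M ∈ Finset.Icc 1 N, (N.choose M : ℝ) *
        (5 * ((M : ℝ) / N) - 8 * ((M : ℝ) / N) ^ 2 + 4 * ((M : ℝ) / N) ^ 3)
      = ∑ M ∈ range (N+1), (N.choose M : ℝ) *
        (5 * ((M : ℝ) / N) - 8 * ((M : ℝ) / N) ^ 2 + 4 * ((M : ℝ) / N) ^ 3) := by
    apply Finset.sum_subset
    · intro x hx
      simp only [Finset.mem_Icc] at hx
      simp only [Finset.mem_range]; omega
    · intro x hx hx'
      simp only [Finset.mem_range] at hx
      simp only [Finset.mem_Icc] at hx'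
      have : x = 0 := by omega
      subst this
      simp
  rw [hext]
  have hsplit : ∑ M ∈ range (N+1), (N.choose M : ℝ) *
        (5 * ((M : ℝ) / N) - 8 * ((M : ℝ) / N) ^ 2 + 4 * ((M : ℝ) / N) ^ 3)
      = (5 / N) * (∑ M ∈ range (N+1), (M:ℝ) * (N.choose M))
        - (8 / N^2) * (∑ M ∈ range (N+1), (M:ℝ)^2 * (N.choose M))
        + (4 / N^3) * (∑ M ∈ range (N+1), (M:ℝ)^3 * (N.choose M)) := by
    rw [Finset.mul_sum, Finset.mul_sum, Finset.mul_sum, ← Finset.sum_sub_distrib,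
      ← Finset.sum_add_distrib]
    apply Finset.sum_congr rfl
    intro i _
    field_simp
  rw [hsplit]
  have hA := sumA N
  have hB := sumB N
  have hC := sumC N
  have h2 : (2:ℝ)^N ≠ 0 := by positivity
  field_simp
  linear_combination (5*(N:ℝ)^2) * hA - (4*(N:ℝ)) * hB + hC
end

section
/- For every natural number q and every natural number N ≥ 1, (1/2^N) · Σ_{M=1}^{N} C(N,M) · sin²((2q+1)·θ_M) = 1/2, where θ_M = arcsin(√(M/N)) and C(N,M) denotes the binomial coefficient. -/
open Finset Real

lemma aux_sin_sq (q : ℕ) (θ : ℝ) :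
    Real.sin ((2 * (q : ℝ) + 1) * (Real.pi / 2 - θ)) ^ 2 =
      Real.cos ((2 * (q : ℝ) + 1) * θ) ^ 2 := by
  have h : (2 * (q : ℝ) + 1) * (Real.pi / 2 - θ)
      = (q : ℝ) * Real.pi + (Real.pi / 2 - (2 * (q : ℝ) + 1) * θ) := by ring
  rw [h, Real.sin_add, Real.sin_nat_mul_pi, Real.sin_pi_div_two_sub]
  have hc : Real.cos ((q : ℝ) * Real.pi) = (-1) ^ q := by
    simpa using Real.cos_nat_mul_pi_sub 0 q
  rw [hc, zero_mul, zero_add, mul_pow, ← pow_mul, mul_comm q 2, pow_mul]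
  norm_num

lemma aux_arcsin (N M : ℕ) (hM : M ≤ N) (hN : 1 ≤ N) :
    Real.arcsin (Real.sqrt (((N - M : ℕ) : ℝ) / N)) =
      Real.pi / 2 - Real.arcsin (Real.sqrt ((M : ℝ) / N)) := by
  have hN0 : (0:ℝ) < N := by exact_mod_cast hN
  set x := Real.sqrt ((M : ℝ) / N)
  have hx0 : 0 ≤ x := Real.sqrt_nonneg _
  have hdiv : (M : ℝ) / N ≤ 1 := by
    rw [div_le_one hN0]; exact_mod_cast hM
  have hx1 : x ≤ 1 := by
    rw [show (1:ℝ) = Real.sqrt 1 by simp]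
    exact Real.sqrt_le_sqrt hdiv
  have hx2 : x ^ 2 = (M : ℝ) / N := by
    rw [sq]; exact Real.mul_self_sqrt (by positivity)
  have hθ := Real.arcsin_mem_Icc x
  have hθ0 : 0 ≤ Real.arcsin x := Real.arcsin_nonneg.mpr hx0
  have key : ((N - M : ℕ) : ℝ) / N = 1 - x ^ 2 := by
    rw [hx2, Nat.cast_sub hM]
    field_simp
  rw [key]
  have : Real.sqrt (1 - x ^ 2) = Real.sin (Real.pi / 2 - Real.arcsin x) := by
    rw [Real.sin_pi_div_two_sub, Real.cos_arcsin]
  rw [this, Real.arcsin_sin]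
  · linarith [Real.arcsin_le_pi_div_two x, Real.pi_pos]
  · linarith [hθ.2]

theorem stmt_14 (q N : ℕ) (hN : 1 ≤ N) :
    (1 / 2 ^ N : ℝ) * ∑ M ∈ Finset.Icc 1 N, (N.choose M : ℝ) *
        Real.sin ((2 * (q : ℝ) + 1) * Real.arcsin (Real.sqrt ((M : ℝ) / N))) ^ 2 = 1 / 2 := by
  set g : ℕ → ℝ := fun M => (N.choose M : ℝ) *
      Real.sin ((2 * (q : ℝ) + 1) * Real.arcsin (Real.sqrt ((M : ℝ) / N))) ^ 2 with hg
  have hg0 : g 0 = 0 := by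
    simp [hg]
  have hsum_eq : ∑ M ∈ Finset.Icc 1 N, g M = ∑ M ∈ Finset.range (N + 1), g M := by
    apply Finset.sum_subset
    · intro x hx
      simp only [Finset.mem_Icc] at hx
      simp [Finset.mem_range]; omega
    · intro x hx hx'
      simp only [Finset.mem_range] at hx
      simp only [Finset.mem_Icc, not_and, not_le] at hx'
      have : x = 0 := by omega
      rw [this, hg0]
  -- pairing
  have hpair : ∀ M ∈ Finset.range (N + 1), g M + g (N - M) = (N.choose M : ℝ) := by
    intro M hM
    rw [Finset.mem_range] at hM
    have hMN : M ≤ N := by omega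
    simp only [hg]
    rw [aux_arcsin N M hMN hN, aux_sin_sq, Nat.choose_symm hMN]
    rw [← mul_add]
    rw [Real.sin_sq_add_cos_sq, mul_one]
  have hrefl : ∑ M ∈ Finset.range (N + 1), g (N - M) = ∑ M ∈ Finset.range (N + 1), g M := by
    have := Finset.sum_range_reflect g (N + 1)
    simpa using this
  have h2S : 2 * ∑ M ∈ Finset.range (N + 1), g M = 2 ^ N := by
    have : ∑ M ∈ Finset.range (N + 1), (g M + g (N - M)) =
        ∑ M ∈ Finset.range (N + 1), (N.choose M : ℝ) := Finset.sum_congr rfl hpair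
    rw [Finset.sum_add_distrib, hrefl] at this
    have hch : ∑ M ∈ Finset.range (N + 1), (N.choose M : ℝ) = 2 ^ N := by
      rw [← Nat.cast_sum]
      rw [Nat.sum_range_choose]
      push_cast; ring
    linarith [this, hch]
  rw [hsum_eq]
  have h2 : (0:ℝ) < 2 ^ N := by positivity
  field_simp
  linarith [h2S]
end
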